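/- Let σ ∈ W^{1,∞}(0,T) with σ(0) ≠ 0, and let K be the Volterra operator (Kv)(t) = ∫₀^t σ(s)v(t−s) ds on L²(0,T;L²(Ω)). Then there exist positive constants C₁, C₂ depending only on T and ‖σ‖_{W^{1,∞}} such that C₁‖Kv‖_{H¹(0,T;L²(Ω))} ≤ ‖v‖_{L²(0,T;L²(Ω))} ≤ C₂‖Kv‖_{H¹(0,T;L²(Ω))} for all v ∈ L²(0,T;L²(Ω)). -/

import Mathlib

open Real MeasureTheory intervalIntegral
set_option maxHeartbeats 1000000

lemma cs_aux {α : Type*} [MeasurableSpace α] (μ : Measure α) [IsFiniteMeasure μ]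
    {f : α → ℝ} (hf0 : ∀ x, 0 ≤ f x) (hf : MemLp f 2 μ) :
    ∫ a, f a ∂μ ≤ Real.sqrt (μ Set.univ).toReal * Real.sqrt (∫ a, (f a)^2 ∂μ) := by
  have hpq : Real.HolderConjugate 2 2 := by
    constructor <;> norm_num
  have h1 : MemLp (fun _ : α => (1:ℝ)) (ENNReal.ofReal 2) μ := by
    simpa using (memLp_const (1:ℝ) (μ := μ) (p := ENNReal.ofReal 2))
  have hf2 : MemLp f (ENNReal.ofReal 2) μ := by
    simpa [ENNReal.ofReal_ofNat] using hf
  have := integral_mul_le_Lp_mul_Lq_of_nonneg hpq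
    (Filter.Eventually.of_forall hf0) (Filter.Eventually.of_forall fun _ => zero_le_one)
    hf2 h1
  simp only [mul_one, one_pow] at this
  have h2 : ∫ a, f a ∂μ ≤ (∫ a, f a ^ (2:ℝ) ∂μ) ^ (1/(2:ℝ)) * (∫ a, (1:ℝ) ∂μ) ^ (1/(2:ℝ)) := by
    convert this using 3 <;> norm_num
  rw [MeasureTheory.integral_const, smul_eq_mul, mul_one] at h2
  have hrw : ∫ a, f a ^ (2:ℝ) ∂μ = ∫ a, (f a)^2 ∂μ := by
    refine integral_congr_ae (Filter.Eventually.of_forall fun a => ?_)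
    show f a ^ (2:ℝ) = f a ^ (2:ℕ)
    rw [Real.rpow_two, sq]
  rw [hrw] at h2
  calc ∫ a, f a ∂μ ≤ (∫ a, (f a)^2 ∂μ) ^ (1/(2:ℝ)) * ((μ Set.univ).toReal) ^ (1/(2:ℝ)) := h2
    _ = Real.sqrt (μ Set.univ).toReal * Real.sqrt (∫ a, (f a)^2 ∂μ) := by
        rw [← Real.sqrt_eq_rpow, ← Real.sqrt_eq_rpow, mul_comm]

lemma cs_interval {E : Type*} [NormedAddCommGroup E] {T : ℝ} (hT : 0 ≤ T) {f : ℝ → E}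
    (hf : MemLp f 2 (volume.restrict (Set.Ioc (0:ℝ) T))) :
    (∫ t in (0:ℝ)..T, ‖f t‖) ≤ Real.sqrt T * Real.sqrt (∫ t in (0:ℝ)..T, ‖f t‖^2) := by
  haveI : IsFiniteMeasure (volume.restrict (Set.Ioc (0:ℝ) T)) := by
    constructor
    rw [Measure.restrict_apply_univ, Real.volume_Ioc]
    exact ENNReal.ofReal_lt_top
  have huniv : ((volume.restrict (Set.Ioc (0:ℝ) T)) Set.univ).toReal = T := by
    rw [Measure.restrict_apply_univ, Real.volume_Ioc, ENNReal.toReal_ofReal (by linarith), sub_zero]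
  rw [intervalIntegral.integral_of_le hT, intervalIntegral.integral_of_le hT]
  have := cs_aux (volume.restrict (Set.Ioc (0:ℝ) T)) (fun t => norm_nonneg (f t)) hf.norm
  rwa [huniv] at this

lemma volterra_core {E : Type*} [NormedAddCommGroup E] [NormedSpace ℝ E] [CompleteSpace E]
    {T S M c : ℝ} (hT : 0 < T) (hS : 0 ≤ S) (hM : 0 ≤ M) (hc : 0 < c)
    {σb σd : ℝ → ℝ} (hσbc : Continuous σb) (hσdm : Measurable σd)
    (hσbS : ∀ s, |σb s| ≤ S) (hσdM : ∀ s, |σd s| ≤ M) (hc0 : |σb 0| = c)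
    {g : ℝ → E} (hgsm : StronglyMeasurable g) (hg2 : MemLp g 2 volume) :
    (∫ t in (0:ℝ)..T, (‖∫ s in (0:ℝ)..t, σb s • g (t - s)‖^2
        + ‖σb 0 • g t + ∫ s in (0:ℝ)..t, σd s • g (t - s)‖^2))
      ≤ (S^2*T^2 + 2*M^2*T^2 + 2*c^2) * (∫ t in (0:ℝ)..T, ‖g t‖^2)
    ∧ (∫ t in (0:ℝ)..T, ‖g t‖^2)
      ≤ (2*c⁻¹^2 + 2*c⁻¹^2*M^2*T*(c⁻¹^2*T*Real.exp (2*(c⁻¹*M+1)*T)))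
         * (∫ t in (0:ℝ)..T, (‖∫ s in (0:ℝ)..t, σb s • g (t - s)‖^2
            + ‖σb 0 • g t + ∫ s in (0:ℝ)..t, σd s • g (t - s)‖^2)) := by
  -- basic abbreviations
  set Kg : ℝ → E := fun t => ∫ s in (0:ℝ)..t, σb s • g (t - s) with hKgdef
  set Wg : ℝ → E := fun t => σb 0 • g t + ∫ s in (0:ℝ)..t, σd s • g (t - s) with hWgdef
  set I : ℝ := ∫ t in (0:ℝ)..T, ‖g t‖^2 with hIdef
  set P : ℝ → ℝ := fun t => ∫ u in (0:ℝ)..t, ‖g u‖ with hPdef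
  haveI : IsFiniteMeasure (volume.restrict (Set.Ioc (0:ℝ) T)) := by
    constructor
    rw [Measure.restrict_apply_univ, Real.volume_Ioc]
    exact ENNReal.ofReal_lt_top
  -- integrability of g and its powers
  have hgR : MemLp g 2 (volume.restrict (Set.Ioc (0:ℝ) T)) := hg2.restrict _
  have hgsq_int : Integrable (fun t => ‖g t‖^2) volume := by
    have := hg2.integrable_norm_rpow (by norm_num) (by norm_num)
    simpa [ENNReal.toReal_ofNat, Real.rpow_two, sq] using this
  have hgsq_ii : IntervalIntegrable (fun t => ‖g t‖^2) volume 0 T :=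
    hgsq_int.intervalIntegrable
  have hgItv : IntervalIntegrable g volume 0 T := by
    rw [intervalIntegrable_iff_integrableOn_Ioc_of_le hT.le]
    exact hgR.integrable one_le_two
  have hng_ii : IntervalIntegrable (fun u => ‖g u‖) volume 0 T := hgItv.norm
  -- facts about P
  haveI : IsFiniteMeasure (volume.restrict (Set.Icc (0:ℝ) T)) := by
    constructor
    rw [Measure.restrict_apply_univ, Real.volume_Icc]
    exact ENNReal.ofReal_lt_top
  have hgIcc : IntegrableOn g (Set.Icc 0 T) volume := (hg2.restrict _).integrable one_le_two
  have hPcont : ContinuousOn P (Set.Icc 0 T) := by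
    have h1 : IntegrableOn (fun u => ‖g u‖) (Set.uIcc 0 T) volume := by
      rw [Set.uIcc_of_le hT.le]; exact hgIcc.norm
    have := intervalIntegral.continuousOn_primitive_interval h1
    rwa [Set.uIcc_of_le hT.le] at this
  have hP0 : ∀ t, 0 ≤ t → 0 ≤ P t := fun t ht =>
    intervalIntegral.integral_nonneg ht (fun u _ => norm_nonneg _)
  have hPmono : ∀ t ∈ Set.Icc (0:ℝ) T, P t ≤ P T := by
    intro t ht
    exact intervalIntegral.integral_mono_interval le_rfl ht.1 ht.2
      (Filter.Eventually.of_forall fun u => norm_nonneg _) hng_ii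
  -- generic convolution-term estimate
  have hconv : ∀ (φ : ℝ → ℝ) (C : ℝ), 0 ≤ C → AEStronglyMeasurable φ volume →
      (∀ s, |φ s| ≤ C) → ∀ t ∈ Set.Icc (0:ℝ) T,
      IntervalIntegrable (fun s => φ s • g (t - s)) volume 0 t ∧
      ‖∫ s in (0:ℝ)..t, φ s • g (t - s)‖ ≤ C * P t := by
    intro φ C hC hφm hφC t ht
    have hcomp : IntervalIntegrable (fun s => g (t - s)) volume 0 t := by
      have h1 := hgItv.comp_sub_left t
      refine h1.mono_set ?_
      rw [sub_zero] at h1 ⊢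
      rw [Set.uIcc_of_le ht.1, Set.uIcc_of_ge (by linarith [ht.2] : t - T ≤ t)]
      exact Set.Icc_subset_Icc (by linarith [ht.2]) le_rfl
    have hφg : IntervalIntegrable (fun s => φ s • g (t - s)) volume 0 t := by
      rw [intervalIntegrable_iff_integrableOn_Ioc_of_le ht.1] at hcomp ⊢
      exact hcomp.smul_of_top_right (memLp_top_of_bound
        (hφm.restrict) C (Filter.Eventually.of_forall fun s => by
          simpa [Real.norm_eq_abs] using hφC s))
    refine ⟨hφg, ?_⟩
    calc ‖∫ s in (0:ℝ)..t, φ s • g (t - s)‖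
        ≤ ∫ s in (0:ℝ)..t, ‖φ s • g (t - s)‖ :=
          intervalIntegral.norm_integral_le_integral_norm ht.1
      _ ≤ ∫ s in (0:ℝ)..t, C * ‖g (t - s)‖ := by
          refine intervalIntegral.integral_mono_on ht.1 hφg.norm
            (hcomp.norm.const_mul C) (fun s _ => ?_)
          rw [norm_smul, Real.norm_eq_abs]
          exact mul_le_mul_of_nonneg_right (hφC s) (norm_nonneg _)
      _ = C * ∫ s in (0:ℝ)..t, ‖g (t - s)‖ := intervalIntegral.integral_const_mul _ _
      _ = C * P t := by
          rw [intervalIntegral.integral_comp_sub_left (fun u => ‖g u‖) t]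
          simp [hPdef]
  -- pointwise bounds
  have hKb : ∀ t ∈ Set.Icc (0:ℝ) T, ‖Kg t‖ ≤ S * P t :=
    fun t ht => ((hconv σb S hS hσbc.aestronglyMeasurable hσbS t ht).2)
  have hDb : ∀ t ∈ Set.Icc (0:ℝ) T, ‖∫ s in (0:ℝ)..t, σd s • g (t - s)‖ ≤ M * P t :=
    fun t ht => ((hconv σd M hM hσdm.aestronglyMeasurable hσdM t ht).2)
  have hWb : ∀ t ∈ Set.Icc (0:ℝ) T, ‖Wg t‖ ≤ c * ‖g t‖ + M * P t := by
    intro t ht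
    calc ‖Wg t‖ ≤ ‖σb 0 • g t‖ + ‖∫ s in (0:ℝ)..t, σd s • g (t - s)‖ := norm_add_le _ _
      _ ≤ c * ‖g t‖ + M * P t := by
          rw [norm_smul, Real.norm_eq_abs, hc0]
          exact add_le_add le_rfl (hDb t ht)
  have hgb : ∀ t ∈ Set.Icc (0:ℝ) T, ‖g t‖ ≤ c⁻¹ * ‖Wg t‖ + c⁻¹ * M * P t := by
    intro t ht
    have hid : σb 0 • g t = Wg t - ∫ s in (0:ℝ)..t, σd s • g (t - s) := by
      rw [hWgdef]; exact (add_sub_cancel_right _ _).symm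
    have : c * ‖g t‖ = ‖σb 0 • g t‖ := by rw [norm_smul, Real.norm_eq_abs, hc0]
    have h2 : c * ‖g t‖ ≤ ‖Wg t‖ + M * P t := by
      rw [this, hid]
      calc ‖Wg t - ∫ s in (0:ℝ)..t, σd s • g (t - s)‖
          ≤ ‖Wg t‖ + ‖∫ s in (0:ℝ)..t, σd s • g (t - s)‖ := norm_sub_le _ _
        _ ≤ ‖Wg t‖ + M * P t := add_le_add le_rfl (hDb t ht)
    calc ‖g t‖ = c⁻¹ * (c * ‖g t‖) := by field_simp
      _ ≤ c⁻¹ * (‖Wg t‖ + M * P t) := by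
          exact mul_le_mul_of_nonneg_left h2 (by positivity)
      _ = c⁻¹ * ‖Wg t‖ + c⁻¹ * M * P t := by ring
  -- measurability of the convolution terms
  have hmeasgen : ∀ (φ : ℝ → ℝ), AEStronglyMeasurable φ volume →
      AEStronglyMeasurable (fun t => ∫ s in (0:ℝ)..t, φ s • g (t - s))
        (volume.restrict (Set.Ioc 0 T)) := by
    intro φ hφm
    obtain ⟨φ', hφ'sm, hφ'⟩ := hφm
    -- null set where φ ≠ φ'
    have hN : ∀ t : ℝ, (∫ s in (0:ℝ)..t, φ s • g (t - s)) = ∫ s in (0:ℝ)..t, φ' s • g (t - s) := by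
      intro t
      refine intervalIntegral.integral_congr_ae ?_
      filter_upwards [hφ'] with s hs _
      rw [hs]
    have hjoint : StronglyMeasurable (fun p : ℝ × ℝ =>
        Set.indicator {q : ℝ × ℝ | q.2 ∈ Set.Ioc 0 q.1}
          (fun q : ℝ × ℝ => φ' q.2 • g (q.1 - q.2)) p) := by
      refine StronglyMeasurable.indicator ?_ ?_
      · exact (hφ'sm.comp_measurable measurable_snd).smul
          (hgsm.comp_measurable (measurable_fst.sub measurable_snd))
      · have : {q : ℝ × ℝ | q.2 ∈ Set.Ioc 0 q.1}
            = {q : ℝ × ℝ | 0 < q.2} ∩ {q : ℝ × ℝ | q.2 ≤ q.1} := by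
          ext q; simp [Set.mem_Ioc, Set.mem_setOf_eq, and_comm]
        rw [this]
        exact (measurableSet_lt measurable_const measurable_snd).inter
          (measurableSet_le measurable_snd measurable_fst)
    have hKF : StronglyMeasurable (fun t => ∫ s,
        Set.indicator {q : ℝ × ℝ | q.2 ∈ Set.Ioc 0 q.1}
          (fun q : ℝ × ℝ => φ' q.2 • g (q.1 - q.2)) (t, s) ∂volume) :=
      hjoint.integral_prod_right'
    refine (hKF.aestronglyMeasurable).congr ?_
    rw [Filter.EventuallyEq, ae_restrict_iff' measurableSet_Ioc]
    refine Filter.Eventually.of_forall (fun t ht => ?_)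
    rw [hN t, intervalIntegral.integral_of_le ht.1.le,
      ← MeasureTheory.integral_indicator measurableSet_Ioc]
    congr 1
  have hKgm : AEStronglyMeasurable Kg (volume.restrict (Set.Ioc 0 T)) :=
    hmeasgen σb hσbc.aestronglyMeasurable
  have hWgm : AEStronglyMeasurable Wg (volume.restrict (Set.Ioc 0 T)) := by
    refine AEStronglyMeasurable.add ?_ (hmeasgen σd hσdm.aestronglyMeasurable)
    exact (hgsm.aestronglyMeasurable.restrict).const_smul _
  -- nonnegativity of I and bound on P T
  have hI0 : 0 ≤ I := intervalIntegral.integral_nonneg hT.le (fun u _ => sq_nonneg _)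
  have hPT0 : 0 ≤ P T := hP0 T hT.le
  have hL2 : (P T)^2 ≤ T * I := by
    have hL : P T ≤ Real.sqrt T * Real.sqrt I := cs_interval hT.le hgR
    calc (P T)^2 ≤ (Real.sqrt T * Real.sqrt I)^2 := by
          exact pow_le_pow_left₀ hPT0 hL 2
      _ = T * I := by rw [mul_pow, Real.sq_sqrt hT.le, Real.sq_sqrt hI0]
  -- integrability of the square norms
  have hKsq : IntegrableOn (fun t => ‖Kg t‖^2) (Set.Ioc 0 T) volume := by
    refine Integrable.mono' (integrable_const ((S * P T)^2)) ?_ ?_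
    · exact (continuous_pow 2).comp_aestronglyMeasurable hKgm.norm
    · rw [ae_restrict_iff' measurableSet_Ioc]
      refine Filter.Eventually.of_forall (fun t ht => ?_)
      have ht' : t ∈ Set.Icc (0:ℝ) T := Set.Ioc_subset_Icc_self ht
      have h1 : ‖Kg t‖ ≤ S * P T :=
        (hKb t ht').trans (mul_le_mul_of_nonneg_left (hPmono t ht') hS)
      rw [Real.norm_eq_abs, abs_of_nonneg (sq_nonneg _)]
      exact pow_le_pow_left₀ (norm_nonneg _) h1 2
  have hWsq : IntegrableOn (fun t => ‖Wg t‖^2) (Set.Ioc 0 T) volume := by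
    refine Integrable.mono'
      (((hgsq_int.restrict).const_mul (2*c^2)).add (integrable_const (2*(M * P T)^2))) ?_ ?_
    · exact (continuous_pow 2).comp_aestronglyMeasurable hWgm.norm
    · rw [ae_restrict_iff' measurableSet_Ioc]
      refine Filter.Eventually.of_forall (fun t ht => ?_)
      have ht' : t ∈ Set.Icc (0:ℝ) T := Set.Ioc_subset_Icc_self ht
      have h1 : ‖Wg t‖ ≤ c * ‖g t‖ + M * P T :=
        (hWb t ht').trans (by
          have := mul_le_mul_of_nonneg_left (hPmono t ht') hM
          linarith)
      rw [Real.norm_eq_abs, abs_of_nonneg (sq_nonneg _)]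
      simp only [Pi.add_apply]
      nlinarith [h1, sq_nonneg (c * ‖g t‖ - M * P T), norm_nonneg (Wg t),
        mul_nonneg hc.le (norm_nonneg (g t)), mul_nonneg hM hPT0]
  have hW1 : IntegrableOn (fun t => ‖Wg t‖) (Set.Ioc 0 T) volume := by
    refine Integrable.mono'
      (((hgR.integrable one_le_two).norm.const_mul c).add (integrable_const (M * P T))) ?_ ?_
    · exact hWgm.norm
    · rw [ae_restrict_iff' measurableSet_Ioc]
      refine Filter.Eventually.of_forall (fun t ht => ?_)
      have ht' : t ∈ Set.Icc (0:ℝ) T := Set.Ioc_subset_Icc_self ht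
      rw [Real.norm_eq_abs, abs_of_nonneg (norm_nonneg _)]
      simp only [Pi.add_apply]
      exact (hWb t ht').trans (by
        have := mul_le_mul_of_nonneg_left (hPmono t ht') hM
        linarith)
  have hKsq_ii : IntervalIntegrable (fun t => ‖Kg t‖^2) volume 0 T := by
    rw [intervalIntegrable_iff_integrableOn_Ioc_of_le hT.le]; exact hKsq
  have hWsq_ii : IntervalIntegrable (fun t => ‖Wg t‖^2) volume 0 T := by
    rw [intervalIntegrable_iff_integrableOn_Ioc_of_le hT.le]; exact hWsq
  have hW1_ii : IntervalIntegrable (fun t => ‖Wg t‖) volume 0 T := by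
    rw [intervalIntegrable_iff_integrableOn_Ioc_of_le hT.le]; exact hW1
  -- Step A : upper bound of J by I
  have hStepA : (∫ t in (0:ℝ)..T, (‖Kg t‖^2 + ‖Wg t‖^2))
      ≤ (S^2*T^2 + 2*M^2*T^2 + 2*c^2) * I := by
    have hpt : ∀ t ∈ Set.Icc (0:ℝ) T, ‖Kg t‖^2 + ‖Wg t‖^2
        ≤ (S * P T)^2 + (2*c^2 * ‖g t‖^2 + 2*(M * P T)^2) := by
      intro t ht
      have h1 : ‖Kg t‖ ≤ S * P T :=
        (hKb t ht).trans (mul_le_mul_of_nonneg_left (hPmono t ht) hS)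
      have h2 : ‖Wg t‖ ≤ c * ‖g t‖ + M * P T :=
        (hWb t ht).trans (by
          have := mul_le_mul_of_nonneg_left (hPmono t ht) hM; linarith)
      nlinarith [sq_nonneg (c * ‖g t‖ - M * P T), norm_nonneg (Kg t), norm_nonneg (Wg t),
        mul_nonneg hc.le (norm_nonneg (g t)), mul_nonneg hM hPT0, mul_nonneg hS hPT0]
    have hrhs_ii : IntervalIntegrable
        (fun t => (S * P T)^2 + (2*c^2 * ‖g t‖^2 + 2*(M * P T)^2)) volume 0 T := by
      exact (_root_.intervalIntegrable_const).add
        (((hgsq_ii.const_mul (2*c^2))).add _root_.intervalIntegrable_const)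
    calc (∫ t in (0:ℝ)..T, (‖Kg t‖^2 + ‖Wg t‖^2))
        ≤ ∫ t in (0:ℝ)..T, ((S * P T)^2 + (2*c^2 * ‖g t‖^2 + 2*(M * P T)^2)) :=
          intervalIntegral.integral_mono_on hT.le (hKsq_ii.add hWsq_ii) hrhs_ii hpt
      _ = T * (S * P T)^2 + (2*c^2 * I + T * (2*(M * P T)^2)) := by
          rw [intervalIntegral.integral_add _root_.intervalIntegrable_const
            ((hgsq_ii.const_mul (2*c^2)).add _root_.intervalIntegrable_const),
            intervalIntegral.integral_add (hgsq_ii.const_mul (2*c^2)) _root_.intervalIntegrable_const,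
            intervalIntegral.integral_const, intervalIntegral.integral_const,
            intervalIntegral.integral_const_mul]
          simp [hIdef, smul_eq_mul]
      _ ≤ (S^2*T^2 + 2*M^2*T^2 + 2*c^2) * I := by
            have e0 : (S^2*T) * (P T^2) ≤ (S^2*T)*(T*I) :=
              mul_le_mul_of_nonneg_left hL2 (by positivity)
            have e0' : (2*M^2*T) * (P T^2) ≤ (2*M^2*T)*(T*I) :=
              mul_le_mul_of_nonneg_left hL2 (by positivity)
            have e1 : T * (S * P T)^2 ≤ S^2*T^2*I := by nlinarith [e0]
            have e2 : T * (2*(M * P T)^2) ≤ 2*M^2*T^2*I := by nlinarith [e0']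
            nlinarith [e1, e2]
  -- Step B : Gronwall argument
  set IW : ℝ := ∫ t in (0:ℝ)..T, ‖Wg t‖^2 with hIWdef
  have hIW0 : 0 ≤ IW := intervalIntegral.integral_nonneg hT.le (fun u _ => sq_nonneg _)
  set ε : ℝ := c⁻¹ * ∫ t in (0:ℝ)..T, ‖Wg t‖ with hεdef
  have hε0 : 0 ≤ ε := mul_nonneg (by positivity)
    (intervalIntegral.integral_nonneg hT.le (fun u _ => norm_nonneg _))
  set KK : ℝ := c⁻¹ * M + 1 with hKKdef
  have hKK : 0 < KK := by positivity
  set Q : ℝ → ℝ := fun t => ∫ u in (0:ℝ)..t, P u with hQdef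
  have hPii : ∀ t ∈ Set.Icc (0:ℝ) T, IntervalIntegrable P volume 0 t := by
    intro t ht
    refine ContinuousOn.intervalIntegrable (hPcont.mono ?_)
    rw [Set.uIcc_of_le ht.1]
    exact Set.Icc_subset_Icc le_rfl ht.2
  have hQcont : ContinuousOn Q (Set.Icc 0 T) := by
    have h1 : IntegrableOn P (Set.uIcc 0 T) volume := by
      rw [Set.uIcc_of_le hT.le]
      exact hPcont.integrableOn_Icc
    have := intervalIntegral.continuousOn_primitive_interval h1
    rwa [Set.uIcc_of_le hT.le] at this
  have hQ0 : ∀ t ∈ Set.Icc (0:ℝ) T, 0 ≤ Q t := fun t ht =>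
    intervalIntegral.integral_nonneg ht.1 (fun u hu => hP0 u hu.1)
  have hQderiv : ∀ t ∈ Set.Ico (0:ℝ) T, HasDerivWithinAt Q (P t) (Set.Ici t) t := by
    intro t ht
    refine intervalIntegral.integral_hasDerivWithinAt_right
      (hPii t ⟨ht.1, ht.2.le⟩) ⟨Set.Ico t T, ?_, ?_⟩ ?_
    · exact Ico_mem_nhdsGT_of_mem ⟨le_rfl, ht.2⟩
    · exact (hPcont.mono (fun x hx => ⟨ht.1.trans hx.1, hx.2.le⟩)).aestronglyMeasurable
        measurableSet_Ico
    · have h := hPcont.continuousWithinAt (Set.mem_Icc.mpr ⟨ht.1, ht.2.le⟩)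
      refine h.mono_of_mem_nhdsWithin ?_
      refine Filter.mem_of_superset (Ico_mem_nhdsGT_of_mem ⟨le_rfl, ht.2⟩) ?_
      exact fun x hx => ⟨ht.1.trans hx.1, hx.2.le⟩
  have hPbound : ∀ t ∈ Set.Icc (0:ℝ) T, P t ≤ ε + KK * Q t := by
    intro t ht
    have hWii_t : IntervalIntegrable (fun u => ‖Wg u‖) volume 0 t := by
      refine hW1_ii.mono_set ?_
      rw [Set.uIcc_of_le ht.1, Set.uIcc_of_le hT.le]
      exact Set.Icc_subset_Icc le_rfl ht.2
    have hng_t : IntervalIntegrable (fun u => ‖g u‖) volume 0 t := by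
      refine hng_ii.mono_set ?_
      rw [Set.uIcc_of_le ht.1, Set.uIcc_of_le hT.le]
      exact Set.Icc_subset_Icc le_rfl ht.2
    have h1 : P t ≤ ∫ u in (0:ℝ)..t, (c⁻¹ * ‖Wg u‖ + c⁻¹ * M * P u) := by
      refine intervalIntegral.integral_mono_on ht.1 hng_t
        ((hWii_t.const_mul c⁻¹).add ((hPii t ht).const_mul (c⁻¹ * M))) ?_
      intro u hu
      exact hgb u ⟨hu.1, hu.2.trans ht.2⟩
    rw [intervalIntegral.integral_add (hWii_t.const_mul c⁻¹)
        ((hPii t ht).const_mul (c⁻¹ * M)),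
      intervalIntegral.integral_const_mul, intervalIntegral.integral_const_mul] at h1
    have h2 : (∫ u in (0:ℝ)..t, ‖Wg u‖) ≤ ∫ u in (0:ℝ)..T, ‖Wg u‖ :=
      intervalIntegral.integral_mono_interval le_rfl ht.1 ht.2
        (Filter.Eventually.of_forall fun u => norm_nonneg _) hW1_ii
    have h3 : c⁻¹ * M * Q t ≤ KK * Q t := by
      have := hQ0 t ht
      nlinarith
    have h4 : c⁻¹ * (∫ u in (0:ℝ)..t, ‖Wg u‖) ≤ ε := by
      rw [hεdef]
      exact mul_le_mul_of_nonneg_left h2 (by positivity)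
    calc P t ≤ c⁻¹ * (∫ u in (0:ℝ)..t, ‖Wg u‖) + c⁻¹ * M * Q t := h1
      _ ≤ ε + KK * Q t := add_le_add h4 h3
  have hgron : ∀ t ∈ Set.Icc (0:ℝ) T, ‖Q t‖ ≤ gronwallBound 0 KK ε (t - 0) := by
    refine norm_le_gronwallBound_of_norm_deriv_right_le hQcont hQderiv (by simp [hQdef]) ?_
    intro t ht
    have ht' : t ∈ Set.Icc (0:ℝ) T := ⟨ht.1, ht.2.le⟩
    rw [Real.norm_eq_abs, Real.norm_eq_abs, abs_of_nonneg (hP0 t ht.1),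
      abs_of_nonneg (hQ0 t ht')]
    linarith [hPbound t ht']
  have hPT : P T ≤ ε * Real.exp (KK * T) := by
    have hq := hgron T ⟨hT.le, le_rfl⟩
    rw [Real.norm_eq_abs, abs_of_nonneg (hQ0 T ⟨hT.le, le_rfl⟩), sub_zero,
      gronwallBound_of_K_ne_0 hKK.ne'] at hq
    have h5 := hPbound T ⟨hT.le, le_rfl⟩
    have h6 : KK * Q T ≤ KK * (0 * Real.exp (KK * T) + ε / KK * (Real.exp (KK * T) - 1)) :=
      mul_le_mul_of_nonneg_left hq hKK.le
    have h7 : KK * (0 * Real.exp (KK * T) + ε / KK * (Real.exp (KK * T) - 1))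
        = ε * (Real.exp (KK * T) - 1) := by
      field_simp
      ring
    rw [h7] at h6
    nlinarith [Real.one_le_exp (show (0:ℝ) ≤ KK * T by positivity)]
  -- assemble Step B
  have hWmem : MemLp Wg 2 (volume.restrict (Set.Ioc 0 T)) :=
    (memLp_two_iff_integrable_sq_norm hWgm).2 hWsq
  have hε2 : ε^2 ≤ c⁻¹^2 * T * IW := by
    have hcsW : (∫ t in (0:ℝ)..T, ‖Wg t‖) ≤ Real.sqrt T * Real.sqrt IW :=
      cs_interval hT.le hWmem
    have hWnn : 0 ≤ ∫ t in (0:ℝ)..T, ‖Wg t‖ :=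
      intervalIntegral.integral_nonneg hT.le (fun u _ => norm_nonneg _)
    have h8 : (∫ t in (0:ℝ)..T, ‖Wg t‖)^2 ≤ T * IW := by
      calc (∫ t in (0:ℝ)..T, ‖Wg t‖)^2 ≤ (Real.sqrt T * Real.sqrt IW)^2 :=
            pow_le_pow_left₀ hWnn hcsW 2
        _ = T * IW := by rw [mul_pow, Real.sq_sqrt hT.le, Real.sq_sqrt hIW0]
    calc ε^2 = c⁻¹^2 * (∫ t in (0:ℝ)..T, ‖Wg t‖)^2 := by rw [hεdef, mul_pow]
      _ ≤ c⁻¹^2 * (T * IW) := mul_le_mul_of_nonneg_left h8 (by positivity)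
      _ = c⁻¹^2 * T * IW := by ring
  have hI_IW : I ≤ 2*c⁻¹^2 * IW + 2*c⁻¹^2*M^2*T*(P T)^2 := by
    have hpt2 : ∀ t ∈ Set.Icc (0:ℝ) T,
        ‖g t‖^2 ≤ 2*c⁻¹^2 * ‖Wg t‖^2 + 2*c⁻¹^2*M^2*(P T)^2 := by
      intro t ht
      have h1 : ‖g t‖ ≤ c⁻¹ * ‖Wg t‖ + c⁻¹ * M * P T := by
        refine (hgb t ht).trans ?_
        have := mul_le_mul_of_nonneg_left (hPmono t ht) (by positivity : (0:ℝ) ≤ c⁻¹ * M)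
        linarith
      nlinarith [h1, sq_nonneg (c⁻¹ * ‖Wg t‖ - c⁻¹ * M * P T), norm_nonneg (g t),
        mul_nonneg (by positivity : (0:ℝ) ≤ c⁻¹) (norm_nonneg (Wg t)),
        mul_nonneg (mul_nonneg (by positivity : (0:ℝ) ≤ c⁻¹) hM) hPT0]
    have hrhs2_ii : IntervalIntegrable
        (fun t => 2*c⁻¹^2 * ‖Wg t‖^2 + 2*c⁻¹^2*M^2*(P T)^2) volume 0 T :=
      (hWsq_ii.const_mul _).add _root_.intervalIntegrable_const
    calc I ≤ ∫ t in (0:ℝ)..T, (2*c⁻¹^2 * ‖Wg t‖^2 + 2*c⁻¹^2*M^2*(P T)^2) :=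
          intervalIntegral.integral_mono_on hT.le hgsq_ii hrhs2_ii hpt2
      _ = 2*c⁻¹^2 * IW + T * (2*c⁻¹^2*M^2*(P T)^2) := by
          rw [intervalIntegral.integral_add (hWsq_ii.const_mul _)
            _root_.intervalIntegrable_const, intervalIntegral.integral_const_mul,
            intervalIntegral.integral_const]
          simp [hIWdef, smul_eq_mul]
      _ = 2*c⁻¹^2 * IW + 2*c⁻¹^2*M^2*T*(P T)^2 := by ring
  have hPT2 : (P T)^2 ≤ c⁻¹^2 * T * Real.exp (2*KK*T) * IW := by
    have h9 : (P T)^2 ≤ (ε * Real.exp (KK * T))^2 :=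
      pow_le_pow_left₀ hPT0 hPT 2
    have h10 : (ε * Real.exp (KK * T))^2 = ε^2 * Real.exp (2*KK*T) := by
      rw [mul_pow, sq (Real.exp (KK*T)), ← Real.exp_add]
      ring_nf
    have h11 : ε^2 * Real.exp (2*KK*T) ≤ (c⁻¹^2 * T * IW) * Real.exp (2*KK*T) :=
      mul_le_mul_of_nonneg_right hε2 (Real.exp_nonneg _)
    calc (P T)^2 ≤ ε^2 * Real.exp (2*KK*T) := by rw [← h10]; exact h9
      _ ≤ (c⁻¹^2 * T * IW) * Real.exp (2*KK*T) := h11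
      _ = c⁻¹^2 * T * Real.exp (2*KK*T) * IW := by ring
  have hStepB : I ≤ (2*c⁻¹^2 + 2*c⁻¹^2*M^2*T*(c⁻¹^2*T*Real.exp (2*KK*T)))
      * (∫ t in (0:ℝ)..T, (‖Kg t‖^2 + ‖Wg t‖^2)) := by
    have hJsplit : (∫ t in (0:ℝ)..T, (‖Kg t‖^2 + ‖Wg t‖^2))
        = (∫ t in (0:ℝ)..T, ‖Kg t‖^2) + IW :=
      intervalIntegral.integral_add hKsq_ii hWsq_ii
    have hKnn : 0 ≤ ∫ t in (0:ℝ)..T, ‖Kg t‖^2 :=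
      intervalIntegral.integral_nonneg hT.le (fun u _ => sq_nonneg _)
    have hIWJ : IW ≤ ∫ t in (0:ℝ)..T, (‖Kg t‖^2 + ‖Wg t‖^2) := by
      rw [hJsplit]; linarith
    have hcoef : (0:ℝ) ≤ 2*c⁻¹^2 + 2*c⁻¹^2*M^2*T*(c⁻¹^2*T*Real.exp (2*KK*T)) := by positivity
    have h12 : I ≤ (2*c⁻¹^2 + 2*c⁻¹^2*M^2*T*(c⁻¹^2*T*Real.exp (2*KK*T))) * IW := by
      have h13 : 2*c⁻¹^2*M^2*T*(P T)^2
          ≤ 2*c⁻¹^2*M^2*T*(c⁻¹^2 * T * Real.exp (2*KK*T) * IW) :=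
        mul_le_mul_of_nonneg_left hPT2 (by positivity)
      calc I ≤ 2*c⁻¹^2 * IW + 2*c⁻¹^2*M^2*T*(P T)^2 := hI_IW
        _ ≤ 2*c⁻¹^2 * IW + 2*c⁻¹^2*M^2*T*(c⁻¹^2 * T * Real.exp (2*KK*T) * IW) := by linarith
        _ = (2*c⁻¹^2 + 2*c⁻¹^2*M^2*T*(c⁻¹^2*T*Real.exp (2*KK*T))) * IW := by ring
    calc I ≤ (2*c⁻¹^2 + 2*c⁻¹^2*M^2*T*(c⁻¹^2*T*Real.exp (2*KK*T))) * IW := h12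
      _ ≤ (2*c⁻¹^2 + 2*c⁻¹^2*M^2*T*(c⁻¹^2*T*Real.exp (2*KK*T)))
          * (∫ t in (0:ℝ)..T, (‖Kg t‖^2 + ‖Wg t‖^2)) :=
        mul_le_mul_of_nonneg_left hIWJ hcoef
  exact ⟨hStepA, by rw [hKKdef] at hStepB; exact hStepB⟩

/-- For `σ ∈ W^{1,∞}(0,T)` with `σ(0) ≠ 0`, the Volterra operator
`(Kv)(t) = ∫₀^t σ(s) • v(t−s) ds` satisfies the two-sided estimate
`C₁ ‖Kv‖_{H¹(0,T;E)} ≤ ‖v‖_{L²(0,T;E)} ≤ C₂ ‖Kv‖_{H¹(0,T;E)}`,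
where the `H¹` norm is `(‖Kv‖²_{L²} + ‖∂_t Kv‖²_{L²})^{1/2}` and
`∂_t(Kv)(t) = σ(0) • v(t) + ∫₀^t σ'(s) • v(t−s) ds`. -/
theorem volterra_operator_norm_equivalence
    {E : Type*} [NormedAddCommGroup E] [InnerProductSpace ℝ E] [CompleteSpace E]
    (T : ℝ) (hT : 0 < T)
    (σ σ' : ℝ → ℝ)
    (hσ : ∀ t ∈ Set.Icc (0:ℝ) T, HasDerivAt σ (σ' t) t)
    (hσ'bd : ∃ M, ∀ t ∈ Set.Icc (0:ℝ) T, |σ' t| ≤ M)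
    (hσ0 : σ 0 ≠ 0) :
    ∃ C₁ > (0:ℝ), ∃ C₂ > (0:ℝ),
      ∀ v : ℝ → E, MemLp v 2 (volume.restrict (Set.Ioo 0 T)) →
        C₁ * Real.sqrt (∫ t in (0:ℝ)..T,
              (‖∫ s in (0:ℝ)..t, σ s • v (t - s)‖ ^ 2
                + ‖σ 0 • v t + ∫ s in (0:ℝ)..t, σ' s • v (t - s)‖ ^ 2))
          ≤ Real.sqrt (∫ t in (0:ℝ)..T, ‖v t‖ ^ 2) ∧
        Real.sqrt (∫ t in (0:ℝ)..T, ‖v t‖ ^ 2)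
          ≤ C₂ * Real.sqrt (∫ t in (0:ℝ)..T,
              (‖∫ s in (0:ℝ)..t, σ s • v (t - s)‖ ^ 2
                + ‖σ 0 • v t + ∫ s in (0:ℝ)..t, σ' s • v (t - s)‖ ^ 2)) := by
  classical
  obtain ⟨M₀, hM₀⟩ := hσ'bd
  set M : ℝ := max M₀ 0 with hMdef
  have hM0 : (0:ℝ) ≤ M := le_max_right _ _
  have hM : ∀ t ∈ Set.Icc (0:ℝ) T, |σ' t| ≤ M := fun t ht => (hM₀ t ht).trans (le_max_left _ _)
  set c : ℝ := |σ 0| with hcdef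
  have hc : 0 < c := abs_pos.2 hσ0
  -- clamp to [0,T]
  set pr : ℝ → ℝ := fun s => max 0 (min s T) with hprdef
  have hprcont : Continuous pr := continuous_const.max (continuous_id.min continuous_const)
  have hprmem : ∀ s, pr s ∈ Set.Icc (0:ℝ) T := by
    intro s
    constructor
    · exact le_max_left _ _
    · exact max_le hT.le (min_le_right s T)
  have hprid : ∀ s ∈ Set.Icc (0:ℝ) T, pr s = s := by
    intro s hs
    show max 0 (min s T) = s
    rw [min_eq_left hs.2, max_eq_right hs.1]
  set σb : ℝ → ℝ := fun s => σ (pr s) with hσbdef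
  have hσcontOn : ContinuousOn σ (Set.Icc 0 T) :=
    fun x hx => (hσ x hx).continuousAt.continuousWithinAt
  have hσbcont : Continuous σb := hσcontOn.comp_continuous hprcont hprmem
  have hσbeq : ∀ s ∈ Set.Icc (0:ℝ) T, σb s = σ s := by
    intro s hs
    show σ (pr s) = σ s
    rw [hprid s hs]
  have hσb0 : σb 0 = σ 0 := hσbeq 0 ⟨le_rfl, hT.le⟩
  -- measurable representative of the derivative
  set σd : ℝ → ℝ := fun s => if s ∈ Set.Ioo (0:ℝ) T then deriv σb s else 0 with hσddef
  have hσdmeas : Measurable σd :=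
    Measurable.ite measurableSet_Ioo (measurable_deriv σb) measurable_const
  have hσdeq : ∀ s ∈ Set.Ioo (0:ℝ) T, σd s = σ' s := by
    intro s hs
    have hev : σ =ᶠ[nhds s] σb := by
      filter_upwards [isOpen_Ioo.mem_nhds hs] with x hx
      exact (hσbeq x (Set.Ioo_subset_Icc_self hx)).symm
    have hder : HasDerivAt σb (σ' s) s :=
      (hσ s (Set.Ioo_subset_Icc_self hs)).congr_of_eventuallyEq hev.symm
    show (if s ∈ Set.Ioo (0:ℝ) T then deriv σb s else 0) = σ' s
    rw [if_pos hs, hder.deriv]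
  have hσdbd : ∀ s, |σd s| ≤ M := by
    intro s
    by_cases h : s ∈ Set.Ioo (0:ℝ) T
    · rw [hσdeq s h]
      exact hM s (Set.Ioo_subset_Icc_self h)
    · show |if s ∈ Set.Ioo (0:ℝ) T then deriv σb s else 0| ≤ M
      rw [if_neg h]
      simpa using hM0
  -- bound on σb
  set S : ℝ := c + M * T with hSdef
  have hS0 : 0 ≤ S := by positivity
  have hσbbd : ∀ s, |σb s| ≤ S := by
    intro s
    have h1 : ∀ x ∈ Set.Icc (0:ℝ) T, HasDerivWithinAt σ (σ' x) (Set.Icc 0 T) x :=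
      fun x hx => (hσ x hx).hasDerivWithinAt
    have h2 : ‖σ (pr s) - σ 0‖ ≤ M * ‖pr s - 0‖ :=
      (convex_Icc (0:ℝ) T).norm_image_sub_le_of_norm_hasDerivWithin_le h1
        (fun x hx => by simpa [Real.norm_eq_abs] using hM x hx)
        (Set.left_mem_Icc.2 hT.le) (hprmem s)
    have h3 : |pr s| ≤ T := by
      rw [abs_of_nonneg (hprmem s).1]
      exact (hprmem s).2
    have h4 : |σ (pr s)| - |σ 0| ≤ |σ (pr s) - σ 0| := abs_sub_abs_le_abs_sub _ _
    have h5 : M * |pr s| ≤ M * T := mul_le_mul_of_nonneg_left h3 hM0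
    have h6 : ‖pr s - 0‖ = |pr s| := by rw [sub_zero, Real.norm_eq_abs]
    rw [h6, Real.norm_eq_abs] at h2
    show |σ (pr s)| ≤ S
    rw [hSdef, hcdef]
    linarith
  -- constants
  set B : ℝ := S^2*T^2 + 2*M^2*T^2 + 2*c^2 with hBdef
  have hB : 0 < B := by positivity
  set C2sq : ℝ := 2*c⁻¹^2 + 2*c⁻¹^2*M^2*T*(c⁻¹^2*T*Real.exp (2*(c⁻¹*M+1)*T)) with hC2def
  have hC2 : 0 < C2sq := by positivity
  refine ⟨Real.sqrt B⁻¹, Real.sqrt_pos.2 (inv_pos.2 hB), Real.sqrt C2sq, Real.sqrt_pos.2 hC2, ?_⟩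
  intro v hv
  -- measurable representative of v
  have hvm := hv.aestronglyMeasurable
  set g : ℝ → E := (Set.Ioo (0:ℝ) T).indicator (hvm.mk v) with hgdef
  have hgsm : StronglyMeasurable g := hvm.stronglyMeasurable_mk.indicator measurableSet_Ioo
  have hg2 : MemLp g 2 volume :=
    (memLp_indicator_iff_restrict measurableSet_Ioo).2 (hv.ae_eq hvm.ae_eq_mk)
  have hvg : v =ᵐ[volume.restrict (Set.Ioo 0 T)] g :=
    hvm.ae_eq_mk.trans (indicator_ae_eq_restrict measurableSet_Ioo).symm
  have hvg' : ∀ᵐ t ∂(volume : Measure ℝ), t ∈ Set.Ioo (0:ℝ) T → v t = g t :=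
    (ae_restrict_iff' measurableSet_Ioo).1 hvg
  have hTne : ∀ᵐ t ∂(volume : Measure ℝ), t ≠ T := by
    refine ae_iff.2 ?_
    have h : {a : ℝ | ¬ a ≠ T} = {T} := by ext a; simp
    rw [h]
    exact measure_singleton T
  -- rewriting the v-integrals as g-integrals
  have hEB : (∫ t in (0:ℝ)..T, ‖v t‖^2) = ∫ t in (0:ℝ)..T, ‖g t‖^2 := by
    refine intervalIntegral.integral_congr_ae ?_
    filter_upwards [hvg', hTne] with t h1 h2 ht
    rw [Set.uIoc_of_le hT.le] at ht
    rw [h1 ⟨ht.1, lt_of_le_of_ne ht.2 h2⟩]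
  have hEK : ∀ t ∈ Set.Ioc (0:ℝ) T,
      (∫ s in (0:ℝ)..t, σ s • v (t - s)) = ∫ s in (0:ℝ)..t, σb s • g (t - s) := by
    intro t ht
    have hae : ∀ᵐ s ∂(volume : Measure ℝ), t - s ∈ Set.Ioo (0:ℝ) T → v (t - s) = g (t - s) :=
      (Measure.measurePreserving_sub_left volume t).quasiMeasurePreserving.tendsto_ae.eventually hvg'
    have htne : ∀ᵐ s ∂(volume : Measure ℝ), s ≠ t := by
      refine ae_iff.2 ?_
      have h : {a : ℝ | ¬ a ≠ t} = {t} := by ext a; simp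
      rw [h]
      exact measure_singleton t
    refine intervalIntegral.integral_congr_ae ?_
    filter_upwards [hae, htne] with s h1 h2 hs
    rw [Set.uIoc_of_le ht.1.le] at hs
    have hslt : s < t := lt_of_le_of_ne hs.2 h2
    have hmem : t - s ∈ Set.Ioo (0:ℝ) T := ⟨by linarith, by linarith [ht.2, hs.1]⟩
    rw [h1 hmem, hσbeq s ⟨hs.1.le, hs.2.trans ht.2⟩]
  have hEW : ∀ t ∈ Set.Ioc (0:ℝ) T,
      (∫ s in (0:ℝ)..t, σ' s • v (t - s)) = ∫ s in (0:ℝ)..t, σd s • g (t - s) := by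
    intro t ht
    have hae : ∀ᵐ s ∂(volume : Measure ℝ), t - s ∈ Set.Ioo (0:ℝ) T → v (t - s) = g (t - s) :=
      (Measure.measurePreserving_sub_left volume t).quasiMeasurePreserving.tendsto_ae.eventually hvg'
    have htne : ∀ᵐ s ∂(volume : Measure ℝ), s ≠ t := by
      refine ae_iff.2 ?_
      have h : {a : ℝ | ¬ a ≠ t} = {t} := by ext a; simp
      rw [h]
      exact measure_singleton t
    refine intervalIntegral.integral_congr_ae ?_
    filter_upwards [hae, htne] with s h1 h2 hs
    rw [Set.uIoc_of_le ht.1.le] at hs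
    have hslt : s < t := lt_of_le_of_ne hs.2 h2
    have hmem : t - s ∈ Set.Ioo (0:ℝ) T := ⟨by linarith, by linarith [ht.2, hs.1]⟩
    have hsmem : s ∈ Set.Ioo (0:ℝ) T := ⟨hs.1, hslt.trans_le ht.2⟩
    rw [h1 hmem, hσdeq s hsmem]
  have hEA : (∫ t in (0:ℝ)..T,
        (‖∫ s in (0:ℝ)..t, σ s • v (t - s)‖ ^ 2
          + ‖σ 0 • v t + ∫ s in (0:ℝ)..t, σ' s • v (t - s)‖ ^ 2))
      = ∫ t in (0:ℝ)..T,
        (‖∫ s in (0:ℝ)..t, σb s • g (t - s)‖ ^ 2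
          + ‖σb 0 • g t + ∫ s in (0:ℝ)..t, σd s • g (t - s)‖ ^ 2) := by
    refine intervalIntegral.integral_congr_ae ?_
    filter_upwards [hvg', hTne] with t h1 h2 ht
    rw [Set.uIoc_of_le hT.le] at ht
    rw [hEK t ht, hEW t ht, h1 ⟨ht.1, lt_of_le_of_ne ht.2 h2⟩, hσb0]
  obtain ⟨hA, hB2⟩ := volterra_core hT hS0 hM0 hc hσbcont hσdmeas hσbbd hσdbd
    (by rw [hσb0]) hgsm hg2
  rw [hEA, hEB]
  have hgI0 : 0 ≤ ∫ t in (0:ℝ)..T, ‖g t‖^2 :=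
    intervalIntegral.integral_nonneg hT.le (fun u _ => sq_nonneg _)
  constructor
  · rw [← Real.sqrt_mul (inv_nonneg.2 hB.le)]
    apply Real.sqrt_le_sqrt
    rw [inv_mul_le_iff₀ hB]
    calc (∫ t in (0:ℝ)..T,
          (‖∫ s in (0:ℝ)..t, σb s • g (t - s)‖ ^ 2
            + ‖σb 0 • g t + ∫ s in (0:ℝ)..t, σd s • g (t - s)‖ ^ 2))
        ≤ B * (∫ t in (0:ℝ)..T, ‖g t‖^2) := by rw [hBdef]; exact hA
      _ = B * (∫ t in (0:ℝ)..T, ‖g t‖^2) := rfl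
  · rw [← Real.sqrt_mul hC2.le]
    apply Real.sqrt_le_sqrt
    calc (∫ t in (0:ℝ)..T, ‖g t‖^2)
        ≤ C2sq * (∫ t in (0:ℝ)..T,
          (‖∫ s in (0:ℝ)..t, σb s • g (t - s)‖ ^ 2
            + ‖σb 0 • g t + ∫ s in (0:ℝ)..t, σd s • g (t - s)‖ ^ 2)) := by
          rw [hC2def]; exact hB2
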